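/- arXiv:1605.02474 — 3 statements merged into one kernel-verified Lean document; each statement's English description precedes it below -/
import Mathlib

section
/- In the SINR model in a metric space (V,d): let P > 0, β ≥ 1, N > 0, ζ > 0, R = (P/(βN))^{1/ζ}, ε ∈ (0,1), and I_c = min(β, (1-ε)^{-ζ} - 1)·N/2^ζ. Suppose node v transmits, S ⊆ V is the set of other transmitters, and the total interference at v satisfies ∑_{u∈S} P/d(u,v)^ζ ≤ I_c. Then for every w with d(v,w) ≤ (1-ε)R, the SINR condition holds at w: (P/d(v,w)^ζ)/(N + ∑_{u∈S} P/d(u,w)^ζ) ≥ β. -/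
open Finset

/-- SINR clear channel: if the interference at a transmitter v is at most
    I_c = min(β, (1-ε)^{-ζ} - 1)·N/2^ζ, then every receiver w within distance
    (1-ε)R of v satisfies the SINR condition. -/
theorem sinr_clear_channel_success {V : Type*} [MetricSpace V]
    (P β N ζ ε R Ic : ℝ)
    (hP : 0 < P) (hβ : 1 ≤ β) (hN : 0 < N) (hζ : 0 < ζ)
    (hε : ε ∈ Set.Ioo (0 : ℝ) 1)
    (hR : R = (P / (β * N)) ^ (1 / ζ))
    (hIc : Ic = min β ((1 - ε) ^ (-ζ) - 1) * N / 2 ^ ζ)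
    (v : V) (S : Finset V) (hvS : v ∉ S)
    (hint : ∑ u ∈ S, P / dist u v ^ ζ ≤ Ic) :
    ∀ w : V, w ≠ v → w ∉ S → dist v w ≤ (1 - ε) * R →
      β ≤ (P / dist v w ^ ζ) / (N + ∑ u ∈ S, P / dist u w ^ ζ) := by
  obtain ⟨hε0, hε1⟩ := hε
  intro w hwv hwS hdist
  have h1ε : (0:ℝ) < 1 - ε := by linarith
  have hβ0 : (0:ℝ) < β := by linarith
  have hPβN : 0 < P / (β * N) := by positivity
  have hRpos : 0 < R := hR ▸ Real.rpow_pos_of_pos hPβN _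
  have hRζ : R ^ ζ = P / (β * N) := by
    rw [hR, ← Real.rpow_mul hPβN.le, one_div, inv_mul_cancel₀ hζ.ne', Real.rpow_one]
  have h2ζ : (0:ℝ) < 2 ^ ζ := Real.rpow_pos_of_pos two_pos _
  have hD : 0 < dist v w := dist_pos.mpr hwv.symm
  have hDζ : 0 < dist v w ^ ζ := Real.rpow_pos_of_pos hD _
  -- termwise nonnegativity
  have hterm_nonneg : ∀ u ∈ S, 0 ≤ P / dist u v ^ ζ := fun u _ => by positivity
  -- key per-term bound
  have hkey : ∀ u ∈ S, P / dist u w ^ ζ ≤ 2 ^ ζ * (P / dist u v ^ ζ) := by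
    intro u hu
    have huv : 0 < dist u v := dist_pos.mpr (fun h => hvS (h ▸ hu))
    have huvζ : 0 < dist u v ^ ζ := Real.rpow_pos_of_pos huv _
    have h1 : P / dist u v ^ ζ ≤ Ic :=
      le_trans (Finset.single_le_sum hterm_nonneg hu) hint
    have h2 : Ic ≤ β * N / 2 ^ ζ := by
      rw [hIc]
      gcongr
      exact min_le_left _ _
    have h3 : (2 * R) ^ ζ ≤ dist u v ^ ζ := by
      have h2R : (2 * R) ^ ζ = 2 ^ ζ * R ^ ζ :=
        Real.mul_rpow (by norm_num) hRpos.le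
      have h4 : P / dist u v ^ ζ ≤ β * N / 2 ^ ζ := h1.trans h2
      rw [div_le_div_iff₀ huvζ h2ζ] at h4
      rw [h2R, hRζ, ← mul_div_assoc, div_le_iff₀ (by positivity)]
      nlinarith [h4]
    have h2Rd : 2 * R ≤ dist u v :=
      (Real.rpow_le_rpow_iff (by positivity) huv.le hζ).mp h3
    have hRle : R ≤ dist u v / 2 := by linarith
    have hvw : dist v w ≤ R := hdist.trans (by nlinarith)
    have htri : dist u v ≤ dist u w + dist v w := by
      have := dist_triangle u w v
      rw [dist_comm w v] at this; linarith
    have hduw : dist u v / 2 ≤ dist u w := by linarith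
    have hduw0 : 0 < dist u w := by linarith
    have h5 : (dist u v / 2) ^ ζ ≤ dist u w ^ ζ :=
      Real.rpow_le_rpow (by positivity) hduw hζ.le
    have h6 : (dist u v / 2) ^ ζ = dist u v ^ ζ / 2 ^ ζ :=
      Real.div_rpow huv.le (by norm_num) ζ
    calc P / dist u w ^ ζ ≤ P / (dist u v / 2) ^ ζ := by
          apply div_le_div_of_nonneg_left hP.le (by rw [h6]; positivity) h5
      _ = 2 ^ ζ * (P / dist u v ^ ζ) := by
          rw [h6]; field_simp
  have hIw : ∑ u ∈ S, P / dist u w ^ ζ ≤ ((1 - ε) ^ (-ζ) - 1) * N := by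
    calc ∑ u ∈ S, P / dist u w ^ ζ ≤ ∑ u ∈ S, 2 ^ ζ * (P / dist u v ^ ζ) :=
          Finset.sum_le_sum hkey
      _ = 2 ^ ζ * ∑ u ∈ S, P / dist u v ^ ζ := by rw [Finset.mul_sum]
      _ ≤ 2 ^ ζ * Ic := by gcongr
      _ = min β ((1 - ε) ^ (-ζ) - 1) * N := by rw [hIc]; field_simp
      _ ≤ ((1 - ε) ^ (-ζ) - 1) * N := by
          gcongr; exact min_le_right _ _
  have hIw0 : 0 ≤ ∑ u ∈ S, P / dist u w ^ ζ :=
    Finset.sum_nonneg (fun u _ => by positivity)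
  have hsum_pos : 0 < N + ∑ u ∈ S, P / dist u w ^ ζ := by linarith
  rw [le_div_iff₀ hsum_pos]
  have hεR : 0 < (1 - ε) * R := by positivity
  have hneg : (1 - ε : ℝ) ^ (-ζ) = ((1 - ε) ^ ζ)⁻¹ := Real.rpow_neg h1ε.le _
  have hεRζ : ((1 - ε) * R) ^ ζ = (1 - ε) ^ ζ * R ^ ζ := Real.mul_rpow h1ε.le hRpos.le
  have hεζ : 0 < (1 - ε) ^ ζ := Real.rpow_pos_of_pos h1ε _
  have hβN : β * N = P / R ^ ζ := by
    rw [hRζ]; field_simp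
  calc β * (N + ∑ u ∈ S, P / dist u w ^ ζ)
      ≤ β * (N + ((1 - ε) ^ (-ζ) - 1) * N) := by gcongr
    _ = (1 - ε) ^ (-ζ) * (β * N) := by ring
    _ = P / ((1 - ε) * R) ^ ζ := by
        rw [hβN, hneg, hεRζ]; field_simp
    _ ≤ P / dist v w ^ ζ := by
        apply div_le_div_of_nonneg_left hP.le hDζ
        rw [hεRζ]
        calc dist v w ^ ζ ≤ ((1 - ε) * R) ^ ζ :=
              Real.rpow_le_rpow dist_nonneg hdist hζ.le
          _ = (1 - ε) ^ ζ * R ^ ζ := hεRζ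
end

section
/- Let p_0 ≥ 1/(2n) and consider a value p ∈ [1/(2n), 1/2] that starts at p_0 and in each of L rounds is either doubled (capped at 1/2) or halved (floored at 1/(2n)). If at least (3/5)L of the operations are doublings and at most (2/5)L are halvings, and L ≥ 10·log₂ n, then in at least L/10 of the rounds the value equals 1/2. -/
/-!
Track the potential `log₂ p`. A doubling raises it by exactly one unless the cap `1/2` is reached,
and a halving lowers it by at most one, while the potential always stays in
`[log₂ (1/(2n)), log₂ (1/2)]`, an interval of length `log₂ n`. Summing over the rounds gives
`D - (L - D) - C ≤ log₂ n`, where `D` is the number of doublings and `C` the number of rounds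
ending at `1/2`; with `D ≥ 3L/5` and `log₂ n ≤ L/10` this forces `C ≥ L/10`.
-/

open Finset Real

noncomputable def capStep (a c : ℝ) (b : Bool) (x : ℝ) : ℝ :=
  if b then min (2 * x) c else max (x / 2) a

section CapStep

variable {a c x : ℝ}

lemma capStep_mem_Icc (ha : 0 ≤ a) (hac : a ≤ c) (b : Bool) (hx : x ∈ Set.Icc a c) :
    capStep a c b x ∈ Set.Icc a c := by
  obtain ⟨hax, hxc⟩ := hx
  cases b
  · exact ⟨le_max_right _ _, max_le (by linarith) hac⟩
  · exact ⟨le_min (by linarith) hac, min_le_right _ _⟩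

lemma logb_add_one_sub_ite_le_logb_capStep_true (hx : 0 < x) (hxc : x ≤ c) :
    logb 2 x + 1 - (if capStep a c true x = c then 1 else 0) ≤ logb 2 (capStep a c true x) := by
  by_cases hcap : capStep a c true x = c
  · rw [if_pos hcap, hcap]
    linarith [logb_le_logb_of_le one_lt_two hx hxc]
  · have hdouble : capStep a c true x = 2 * x :=
      (min_choice (2 * x) c).resolve_right hcap
    rw [if_neg hcap, hdouble, logb_mul two_ne_zero hx.ne', logb_self_eq_one one_lt_two]
    linarith

lemma logb_sub_one_le_logb_capStep_false (hx : 0 < x) :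
    logb 2 x - 1 ≤ logb 2 (capStep a c false x) := by
  have := logb_le_logb_of_le one_lt_two (half_pos hx) (le_max_left (x / 2) a)
  rwa [logb_div hx.ne' two_ne_zero, logb_self_eq_one one_lt_two] at this

lemma logb_capStep_sub_logb_ge (b : Bool) (hx : 0 < x) (hxc : x ≤ c) :
    (if b then 1 else -1) - (if b ∧ capStep a c b x = c then 1 else 0)
      ≤ logb 2 (capStep a c b x) - logb 2 x := by
  cases b
  · simpa using logb_sub_one_le_logb_capStep_false (a := a) (c := c) hx
  · have := logb_add_one_sub_ite_le_logb_capStep_true (a := a) hx hxc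
    simp only [if_true, true_and]
    linarith

end CapStep

lemma sum_ite_one_neg_one {α : Type*} (s : Finset α) (P : α → Prop) [DecidablePred P] :
    ∑ x ∈ s, (if P x then (1 : ℝ) else -1) = 2 * #(s.filter P) - #s := by
  rw [sum_ite, sum_const, sum_const, ← card_filter_add_card_filter_not P (s := s)]
  push_cast
  simp only [nsmul_eq_mul, mul_one, mul_neg]
  ring

lemma card_filter_range_succ (L : ℕ) (P : ℕ → Prop) [DecidablePred P] :
    #((range L).filter (fun t => P (t + 1))) = #((Icc 1 L).filter P) := by
  refine card_nbij' (· + 1) (· - 1) ?_ ?_ ?_ ?_ <;> intro t ht <;>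
    simp only [coe_filter, mem_range, mem_Icc, Set.mem_ofPred_eq] at ht ⊢
  · exact ⟨⟨by omega, ht.1⟩, ht.2⟩
  · exact ⟨by omega, by rw [Nat.sub_add_cancel ht.1.1]; exact ht.2⟩
  · rfl
  · omega

section Trajectory

variable {a c : ℝ} {L : ℕ} {p : ℕ → ℝ} {op : ℕ → Bool}

lemma capStep_trajectory_mem_Icc (ha : 0 ≤ a) (hac : a ≤ c) (hp0 : p 0 ∈ Set.Icc a c)
    (hstep : ∀ t < L, p (t + 1) = capStep a c (op t) (p t)) :
    ∀ t ≤ L, p t ∈ Set.Icc a c := by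
  intro t
  induction t with
  | zero => exact fun _ => hp0
  | succ t ih =>
    intro ht
    rw [hstep t ht]
    exact capStep_mem_Icc ha hac _ (ih (Nat.le_of_succ_le ht))

lemma two_mul_card_sub_le_logb (ha : 0 < a) (hac : a ≤ c) (hp0 : p 0 ∈ Set.Icc a c)
    (hstep : ∀ t < L, p (t + 1) = capStep a c (op t) (p t)) :
    2 * (#((range L).filter (fun t => op t = true)) : ℝ) - L
      - #((range L).filter (fun t => op t = true ∧ p (t + 1) = c)) ≤ logb 2 (c / a) := by
  have hmem := capStep_trajectory_mem_Icc ha.le hac hp0 hstep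
  have hpos : ∀ t ≤ L, 0 < p t := fun t ht => ha.trans_le (hmem t ht).1
  have hsum : ∑ t ∈ range L, ((if op t = true then (1 : ℝ) else -1)
      - (if op t = true ∧ p (t + 1) = c then 1 else 0)) ≤ logb 2 (p L) - logb 2 (p 0) := by
    rw [← sum_range_sub (fun t => logb 2 (p t))]
    refine sum_le_sum fun t ht => ?_
    have ht := mem_range.mp ht
    rw [hstep t ht]
    exact logb_capStep_sub_logb_ge (op t) (hpos t ht.le) (hmem t ht.le).2
  rw [sum_sub_distrib, sum_ite_one_neg_one, sum_boole, card_range] at hsum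
  have hpL := logb_le_logb_of_le one_lt_two (hpos L le_rfl) (hmem L le_rfl).2
  have hp0 := logb_le_logb_of_le one_lt_two ha (hmem 0 (Nat.zero_le L)).1
  rw [logb_div (ha.trans_le hac).ne' ha.ne']
  linarith

end Trajectory

theorem doubling_halving_half_rounds_general (n L : ℕ) (hn : 2 ≤ n)
    (p : ℕ → ℝ) (op : ℕ → Bool)
    (hp0 : 1 / (2 * (n : ℝ)) ≤ p 0)
    (hp0' : p 0 ≤ 1 / 2)
    (hstep : ∀ t < L, p (t + 1) =
      if op t then min (2 * p t) (1 / 2) else max (p t / 2) (1 / (2 * (n : ℝ))))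
    (hdouble : (3 : ℝ) / 5 * L ≤ (((range L).filter (fun t => op t = true)).card : ℝ))
    (hlog : 10 * Real.logb 2 n ≤ (L : ℝ)) :
    (L : ℝ) / 10 ≤ (((Icc 1 L).filter (fun t => p t = 1 / 2)).card : ℝ) := by
  have hn2 : (2 : ℝ) ≤ n := by exact_mod_cast hn
  have hfloor : 1 / (2 * (n : ℝ)) ≤ 1 / 2 := by gcongr; linarith
  have hbound := two_mul_card_sub_le_logb (by positivity) hfloor ⟨hp0, hp0'⟩ hstep
  rw [show (1 / 2 : ℝ) / (1 / (2 * n)) = n by field_simp] at hbound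
  have hcap : #((range L).filter (fun t => op t = true ∧ p (t + 1) = 1 / 2))
      ≤ #((Icc 1 L).filter (fun t => p t = 1 / 2)) := by
    rw [← card_filter_range_succ L (fun t => p t = 1 / 2)]
    exact card_le_card (monotone_filter_right _ fun t _ h => h.2)
  have hcap' : (_ : ℝ) ≤ _ := Nat.cast_le.mpr hcap
  linarith

/-- Deterministic counting argument for the doubling/halving process: if a
    value in [1/(2n), 1/2] is doubled (capped at 1/2) in at least (3/5)L of
    L rounds and halved (floored at 1/(2n)) otherwise, with L ≥ 10·log₂ n,
    then the value equals 1/2 in at least L/10 rounds. -/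
theorem doubling_halving_half_rounds (n L : ℕ) (hn : 2 ≤ n) (hL : 0 < L)
    (p : ℕ → ℝ) (op : ℕ → Bool)
    (hp0 : 1 / (2 * (n : ℝ)) ≤ p 0)
    (hp0' : p 0 ≤ 1 / 2)
    (hstep : ∀ t < L, p (t + 1) =
      if op t then min (2 * p t) (1 / 2) else max (p t / 2) (1 / (2 * (n : ℝ))))
    (hdouble : (3 : ℝ) / 5 * L ≤ (((range L).filter (fun t => op t = true)).card : ℝ))
    (hlog : 10 * Real.logb 2 n ≤ (L : ℝ)) :
    (L : ℝ) / 10 ≤ (((Icc 1 L).filter (fun t => p t = 1 / 2)).card : ℝ) :=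
  doubling_halving_half_rounds_general n L hn p op hp0 hp0' hstep hdouble hlog
end

section
/- Let H be the graph on a dominating set DS: u, v ∈ DS ⊆ V are adjacent in H iff d(u,v) ≤ (1 − ε/2)R, where (V,d) is a metric space. Suppose every node w ∈ V has a dominator w' ∈ DS with d(w, w') ≤ εR/4 and d(w', w) ≤ εR/4, and let G be the graph on V with u ~ v iff d(u,v) ≤ (1−ε)R. Then for any u', v' ∈ DS, the H-distance between u' and v' is at most the G-distance between u' and v'. In particular the diameter of H is at most the diameter of G. -/
open scoped Classical

/-- The dominator graph H (threshold (1-ε/2)R on the dominating set) has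
    pairwise distances, and hence diameter, no larger than the communication
    graph G (threshold (1-ε)R): every dominator pair is at H-distance at most
    its G-distance. -/
theorem dominator_graph_distance_le {V : Type*} [MetricSpace V]
    (DS : Set V) (R ε : ℝ) (hR : 0 < R) (hε : ε ∈ Set.Ioo (0 : ℝ) 1)
    (G : SimpleGraph V)
    (hG : ∀ u v : V, G.Adj u v ↔ u ≠ v ∧ dist u v ≤ (1 - ε) * R)
    (H : SimpleGraph DS)
    (hH : ∀ u v : DS, H.Adj u v ↔ u ≠ v ∧ dist (u : V) (v : V) ≤ (1 - ε / 2) * R)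
    (dom : V → DS)
    (hdom : ∀ w : V, dist w (dom w : V) ≤ ε * R / 4)
    (hGconn : G.Preconnected) :
    ∀ u' v' : DS, H.dist u' v' ≤ G.dist (u' : V) (v' : V) := by
  obtain ⟨hε0, hε1⟩ := hε
  -- a dominator map fixing DS
  set f : V → DS := fun x => if h : x ∈ DS then ⟨x, h⟩ else dom x with hf
  have hfd : ∀ x : V, dist x (f x : V) ≤ ε * R / 4 := by
    intro x
    by_cases h : x ∈ DS
    · simp only [hf, dif_pos h, dist_self]
      positivity
    · simpa only [hf, dif_neg h] using hdom x
  -- key: any G-walk lifts to an H-walk between dominators, no longer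
  have key : ∀ (x y : V) (p : G.Walk x y),
      ∃ q : H.Walk (f x) (f y), q.length ≤ p.length := by
    intro x y p
    induction p with
    | nil => exact ⟨SimpleGraph.Walk.nil, le_rfl⟩
    | @cons a b c hab p ih =>
      obtain ⟨q, hq⟩ := ih
      by_cases hfe : f a = f b
      · exact ⟨q.copy hfe.symm rfl, by simp [SimpleGraph.Walk.length_cons]; omega⟩
      · have hadj : H.Adj (f a) (f b) := by
          rw [hH]
          refine ⟨hfe, ?_⟩
          have h1 : dist (f a : V) (f b : V) ≤
              dist (f a : V) a + dist a b + dist b (f b : V) :=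
            dist_triangle4 _ _ _ _
          have h2 : dist (f a : V) a ≤ ε * R / 4 := by
            rw [dist_comm]; exact hfd a
          have h3 : dist a b ≤ (1 - ε) * R := ((hG a b).mp hab).2
          have h4 : dist b (f b : V) ≤ ε * R / 4 := hfd b
          nlinarith
        exact ⟨SimpleGraph.Walk.cons hadj q, by
          simp only [SimpleGraph.Walk.length_cons]; omega⟩
  intro u' v'
  obtain ⟨p, hp⟩ := (hGconn (u' : V) (v' : V)).exists_walk_length_eq_dist
  obtain ⟨q, hq⟩ := key _ _ p
  have hfu : f (u' : V) = u' := by simp [hf, u'.2]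
  have hfv : f (v' : V) = v' := by simp [hf, v'.2]
  calc H.dist u' v' ≤ (q.copy hfu hfv).length := SimpleGraph.dist_le _
    _ ≤ p.length := by rw [SimpleGraph.Walk.length_copy]; exact hq
    _ = G.dist (u' : V) (v' : V) := hp
end
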